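/- arXiv:1204.0949 — 5 statements merged into one kernel-verified Lean document; each statement's English description precedes it below -/
import Mathlib

section
/- For any 1-net, i.e., a family (2^n ℤ + k_n) for n ≥ 1 of pairwise disjoint subsets of ℤ, there is at most one integer i ∈ ℤ that does not belong to any of the sets 2^n ℤ + k_n. -/
/-- The level `n` of a candidate 1-net: the arithmetic progression `2^n ℤ + k n`. -/
def netLevel (k : ℕ+ → ℤ) (n : ℕ+) : Set ℤ :=
  {i : ℤ | ∃ t : ℤ, i = 2 ^ (n : ℕ) * t + k n}

/-- A 1-net: the levels `2^n ℤ + k n`, for `n ≥ 1`, are pairwise disjoint. -/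
def IsOneNet (k : ℕ+ → ℤ) : Prop :=
  Pairwise fun m n : ℕ+ => Disjoint (netLevel k m) (netLevel k n)

/-!
Every level other than level 1 lies in a single parity class, and being disjoint from
`2ℤ + k 1` it lies in `2ℤ + (k 1 + 1)`. Pulling levels `2, 3, …` back along
`x ↦ 2x + (k 1 + 1)` gives a new 1-net, and an integer missed by the old net is the image of
one missed by the new net. Iterating, any two uncovered integers agree modulo every `2^N`.
-/

/-- Levels `2, 3, …` of `k`, pulled back along `x ↦ 2x + (k 1 + 1)`. -/
def tailNet (k : ℕ+ → ℤ) (n : ℕ+) : ℤ :=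
  (k (n + 1) - (k 1 + 1)) / 2

namespace IsOneNet

variable {k : ℕ+ → ℤ}

lemma two_dvd_sub_add_one (hk : IsOneNet k) {n : ℕ+} (hn : n ≠ 1) : 2 ∣ k n - (k 1 + 1) := by
  by_contra h
  have hlevel1 : k n ∈ netLevel k 1 := ⟨(k n - k 1) / 2, by simp only [PNat.one_coe]; omega⟩
  exact Set.disjoint_left.mp (hk hn) ⟨0, by ring⟩ hlevel1

lemma eq_two_mul_tailNet_add (hk : IsOneNet k) (n : ℕ+) :
    k (n + 1) = 2 * tailNet k n + (k 1 + 1) := by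
  have := hk.two_dvd_sub_add_one (PNat.lt_add_left 1 n).ne'
  unfold tailNet
  omega

lemma two_mul_add_mem_netLevel_succ_iff (hk : IsOneNet k) (n : ℕ+) (x : ℤ) :
    2 * x + (k 1 + 1) ∈ netLevel k (n + 1) ↔ x ∈ netLevel (tailNet k) n := by
  simp only [netLevel, Set.mem_ofPred_eq, hk.eq_two_mul_tailNet_add n, PNat.add_coe,
    PNat.one_coe, pow_succ]
  constructor
  · rintro ⟨t, ht⟩
    exact ⟨t, by linarith⟩
  · rintro ⟨t, rfl⟩
    exact ⟨t, by ring⟩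

protected lemma tailNet (hk : IsOneNet k) : IsOneNet (tailNet k) := by
  intro m n hmn
  refine Set.disjoint_left.mpr fun x hm hn => ?_
  rw [← hk.two_mul_add_mem_netLevel_succ_iff] at hm hn
  exact Set.disjoint_left.mp (hk ((add_left_injective 1).ne hmn)) hm hn

lemma exists_eq_two_mul_add_of_forall_notMem (hk : IsOneNet k) {i : ℤ}
    (hi : ∀ n, i ∉ netLevel k n) :
    ∃ x, i = 2 * x + (k 1 + 1) ∧ ∀ n, x ∉ netLevel (tailNet k) n := by
  have hodd : ¬ 2 ∣ i - k 1 := fun ⟨t, ht⟩ => hi 1 ⟨t, by simp only [PNat.one_coe]; linarith⟩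
  obtain ⟨x, hx⟩ : ∃ x, i = 2 * x + (k 1 + 1) := ⟨(i - (k 1 + 1)) / 2, by omega⟩
  refine ⟨x, hx, fun n hn => hi (n + 1) ?_⟩
  rwa [hx, hk.two_mul_add_mem_netLevel_succ_iff]

lemma two_pow_dvd_sub_of_forall_notMem (N : ℕ) (hk : IsOneNet k) {i j : ℤ}
    (hi : ∀ n, i ∉ netLevel k n) (hj : ∀ n, j ∉ netLevel k n) : 2 ^ N ∣ i - j := by
  induction N generalizing k i j with
  | zero => simp
  | succ N ih =>
    obtain ⟨x, rfl, hx⟩ := hk.exists_eq_two_mul_add_of_forall_notMem hi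
    obtain ⟨y, rfl, hy⟩ := hk.exists_eq_two_mul_add_of_forall_notMem hj
    rw [pow_succ', show 2 * x + (k 1 + 1) - (2 * y + (k 1 + 1)) = 2 * (x - y) by ring]
    exact mul_dvd_mul_left 2 (ih hk.tailNet hx hy)

end IsOneNet

/-- For any 1-net, there is at most one integer belonging to no level. -/
theorem at_most_one_uncovered_cell (k : ℕ+ → ℤ) (hk : IsOneNet k) :
    Set.Subsingleton {i : ℤ | ∀ n : ℕ+, i ∉ netLevel k n} := by
  intro i hi j hj
  rw [← sub_eq_zero]
  refine Int.eq_zero_of_abs_lt_dvd (hk.two_pow_dvd_sub_of_forall_notMem (i - j).natAbs hi hj) ?_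
  rw [Int.abs_eq_natAbs]
  exact_mod_cast Nat.lt_two_pow_self
end

section
/- For any sequence α ∈ A^{ℕ₊} and any configuration x ∈ D_α (a Toeplitz configuration with respect to some 1-net), the frequency of each letter a ∈ A in x exists and equals Σ_{i : α_i = a} 2^{-i}. -/
/-- `D_α`: the Toeplitz configurations which are constantly `α n` on level
`2^n ℤ + k n` of some 1-net. -/
def Dconf {A : Type*} (α : ℕ+ → A) : Set (ℤ → A) :=
  {x | ∃ k : ℕ+ → ℤ, IsOneNet k ∧ ∀ n : ℕ+, ∀ i ∈ netLevel k n, x i = α n}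

/-!
Level `n` of a 1-net is a residue class modulo `2^n`, so its density in the windows `[-r, r]`
tends to `2^{-n}`. Fix a finite set `F` of levels. Since the levels are disjoint, the density of
`a` is at least the total density of the levels in `F` on which `x` equals `a`, and at most one
minus the total density of the levels in `F` on which `x` is another letter. As `F` grows, the
limits of both bounds tend to `Σ_{α n = a} 2^{-n}`, because `Σ_n 2^{-n} = 1`.
-/

open Filter Topology Finset

theorem tendsto_of_tendsto_of_tendsto_of_forall_bounds {ι α β : Type*} [LinearOrder β]
    [TopologicalSpace β] [OrderTopology β] {l : Filter ι} [l.NeBot] {f : Filter α} {u : α → β}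
    {L H : ι → β} {s : β}
    (hL : Tendsto L l (𝓝 s)) (hH : Tendsto H l (𝓝 s))
    (hlow : ∀ i, ∃ v : α → β, Tendsto v f (𝓝 (L i)) ∧ ∀ x, v x ≤ u x)
    (hup : ∀ i, ∃ w : α → β, Tendsto w f (𝓝 (H i)) ∧ ∀ x, u x ≤ w x) :
    Tendsto u f (𝓝 s) := by
  refine tendsto_order.2 ⟨fun b hb => ?_, fun b hb => ?_⟩
  · obtain ⟨i, hi⟩ := (hL.eventually (lt_mem_nhds hb)).exists
    obtain ⟨v, hv, hvu⟩ := hlow i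
    exact (hv.eventually (lt_mem_nhds hi)).mono fun x hx => hx.trans_le (hvu x)
  · obtain ⟨i, hi⟩ := (hH.eventually (gt_mem_nhds hb)).exists
    obtain ⟨w, hw, huw⟩ := hup i
    exact (hw.eventually (gt_mem_nhds hi)).mono fun x hx => (huw x).trans_lt hx

theorem hasSum_half_pow_pnat : HasSum (fun n : ℕ+ => ((1 : ℝ) / 2) ^ (n : ℕ)) 1 :=
  hasSum_pnat_iff.2 (by norm_num [hasSum_geometric_two])

open Classical in
noncomputable def windowDensity (s : Set ℤ) (r : ℕ) : ℝ :=
  #{i ∈ Icc (-(r : ℤ)) r | i ∈ s} / (2 * r + 1)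

theorem windowDensity_setOf (p : ℤ → Prop) [DecidablePred p] (r : ℕ) :
    windowDensity {i | p i} r = #{i ∈ Icc (-(r : ℤ)) r | p i} / (2 * r + 1) := by
  simp only [windowDensity, Set.mem_ofPred_eq]

theorem card_Icc_neg_self (r : ℕ) : #(Icc (-(r : ℤ)) r) = 2 * r + 1 := by
  rw [Int.card_Icc]; omega

theorem windowDensity_compl (s : Set ℤ) (r : ℕ) :
    windowDensity sᶜ r = 1 - windowDensity s r := by
  classical
  have hcard := card_filter_add_card_filter_not (s := Icc (-(r : ℤ)) r) (· ∈ s)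
  rw [card_Icc_neg_self] at hcard
  rw [windowDensity, windowDensity, eq_sub_iff_add_eq, ← add_div,
    div_eq_one_iff_eq (by positivity)]
  simp only [Set.mem_compl_iff]
  exact_mod_cast (add_comm _ _).trans hcard

theorem sum_windowDensity_le {ι : Type*} {F : Finset ι} {s : ι → Set ℤ} {t : Set ℤ}
    (hs : (F : Set ι).PairwiseDisjoint s) (hst : ∀ i ∈ F, s i ⊆ t) (r : ℕ) :
    ∑ i ∈ F, windowDensity (s i) r ≤ windowDensity t r := by
  classical
  simp only [windowDensity, ← sum_div]
  gcongr
  rw [← Nat.cast_sum, Nat.cast_le, ← card_biUnion]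
  · refine card_le_card fun j hj => ?_
    obtain ⟨i, hi, hj⟩ := mem_biUnion.1 hj
    rw [mem_filter] at hj ⊢
    exact ⟨hj.1, hst i hi hj.2⟩
  · exact fun i hi i' hi' hii' => disjoint_filter_filter' _ _ (hs hi hi' hii')

theorem abs_mul_card_filter_modEq_Icc_sub_le {m : ℤ} (hm : 0 < m) (c : ℤ) (r : ℕ) :
    |m * (#{i ∈ Icc (-(r : ℤ)) r | i ≡ c [ZMOD m]} : ℝ) - (2 * r + 1)| ≤ m := by
  have hIcc : Icc (-(r : ℤ)) r = Ioc (-(r : ℤ) - 1) r := by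
    ext; simp only [mem_Icc, mem_Ioc]; omega
  have hcard := Int.Ioc_filter_modEq_card (-(r : ℤ) - 1) r hm c
  rw [← hIcc] at hcard
  set N := #{i ∈ Icc (-(r : ℤ)) r | i ≡ c [ZMOD m]}
  set x : ℚ := (((r : ℤ) : ℚ) - c) / m
  set y : ℚ := (((-(r : ℤ) - 1 : ℤ) : ℚ) - c) / m
  have hmq : (0 : ℚ) < m := by exact_mod_cast hm
  have hxy : x - y = (2 * r + 1) / m := by simp only [x, y]; push_cast; field_simp; ring
  have hfx := Int.floor_le x
  have hfx' := Int.lt_floor_add_one x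
  have hfy := Int.floor_le y
  have hfy' := Int.lt_floor_add_one y
  have hlow : x - y - 1 ≤ N := by
    have : ((⌊x⌋ - ⌊y⌋ : ℤ) : ℚ) ≤ N := by exact_mod_cast hcard ▸ le_max_left _ _
    push_cast at this
    linarith
  have hup : (N : ℚ) ≤ x - y + 1 := by
    have hxy0 : 0 ≤ x - y := by rw [hxy]; positivity
    have : (N : ℚ) = max ((⌊x⌋ - ⌊y⌋ : ℤ) : ℚ) 0 := by exact_mod_cast hcard
    rw [this, max_le_iff]
    push_cast
    constructor <;> linarith
  have key : |(m : ℚ) * N - (2 * r + 1)| ≤ m := by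
    rw [abs_le, ← mul_div_cancel₀ (2 * r + 1 : ℚ) hmq.ne', ← hxy]
    constructor <;> nlinarith
  exact_mod_cast key

theorem tendsto_windowDensity_modEq {m : ℤ} (hm : 0 < m) (c : ℤ) :
    Tendsto (windowDensity {i | i ≡ c [ZMOD m]}) atTop (𝓝 (1 / m)) := by
  rw [tendsto_iff_dist_tendsto_zero]
  refine squeeze_zero (fun _ => dist_nonneg) (fun r => ?_)
    tendsto_one_div_add_atTop_nhds_zero_nat
  set N : ℝ := (#{i ∈ Icc (-(r : ℤ)) r | i ≡ c [ZMOD m]} : ℝ)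
  have hm' : (0 : ℝ) < m := by exact_mod_cast hm
  have hr : (0 : ℝ) < 2 * r + 1 := by positivity
  have hN : |m * N - (2 * r + 1)| * (r + 1) ≤ m * (r + 1) :=
    mul_le_mul_of_nonneg_right (abs_mul_card_filter_modEq_Icc_sub_le hm c r) (by positivity)
  have hsub : N / (2 * r + 1) - 1 / m = (m * N - (2 * r + 1)) / (m * (2 * r + 1)) := by
    field_simp
  rw [windowDensity_setOf, Real.dist_eq, hsub, abs_div, abs_of_pos (mul_pos hm' hr),
    div_le_div_iff₀ (by positivity) (by positivity)]
  nlinarith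

theorem netLevel_eq_setOf_modEq (k : ℕ+ → ℤ) (n : ℕ+) :
    netLevel k n = {i | i ≡ k n [ZMOD 2 ^ (n : ℕ)]} := by
  ext i
  rw [Set.mem_ofPred_eq, Int.modEq_comm, Int.modEq_iff_dvd]
  simp only [netLevel, Set.mem_ofPred_eq, dvd_def, sub_eq_iff_eq_add]

theorem tendsto_windowDensity_netLevel (k : ℕ+ → ℤ) (n : ℕ+) :
    Tendsto (windowDensity (netLevel k n)) atTop (𝓝 ((1 / 2) ^ (n : ℕ))) := by
  rw [netLevel_eq_setOf_modEq]
  convert tendsto_windowDensity_modEq (m := 2 ^ (n : ℕ)) (by positivity) (k n) using 2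
  simp

theorem sum_windowDensity_netLevel_le {A : Type*} {α : ℕ+ → A} {k : ℕ+ → ℤ} {x : ℤ → A}
    (hk : IsOneNet k) (hxk : ∀ n : ℕ+, ∀ i ∈ netLevel k n, x i = α n)
    (F : Finset ℕ+) (p : A → Prop) [DecidablePred p] (r : ℕ) :
    ∑ n ∈ F with p (α n), windowDensity (netLevel k n) r ≤ windowDensity {i | p (x i)} r :=
  sum_windowDensity_le (hk.set_pairwise _)
    (fun n hn i hi => by simpa [hxk n i hi] using (mem_filter.1 hn).2) r

theorem frequency_in_Dconf_general {A : Type*} [DecidableEq A]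
    (α : ℕ+ → A) (x : ℤ → A) (hx : x ∈ Dconf α) (a : A) :
    Filter.Tendsto
      (fun r : ℕ =>
        (((Finset.Icc (-(r : ℤ)) (r : ℤ)).filter fun i => x i = a).card : ℝ) /
          (2 * (r : ℝ) + 1))
      Filter.atTop
      (nhds (∑' i : ℕ+, if α i = a then ((1 : ℝ) / 2) ^ (i : ℕ) else 0)) := by
  obtain ⟨k, hk, hxk⟩ := hx
  set S := ∑' n : ℕ+, if α n = a then ((1 : ℝ) / 2) ^ (n : ℕ) else 0
  have hfa : HasSum (fun n : ℕ+ => if α n = a then ((1 : ℝ) / 2) ^ (n : ℕ) else 0) S :=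
    (hasSum_half_pow_pnat.summable.of_nonneg_of_le (fun n => by split_ifs <;> positivity)
      (fun n => by split_ifs <;> simp)).hasSum
  have hfb :
      HasSum (fun n : ℕ+ => if α n ≠ a then ((1 : ℝ) / 2) ^ (n : ℕ) else 0) (1 - S) :=
    (hasSum_half_pow_pnat.sub hfa).congr_fun fun n => by split_ifs <;> simp_all
  simp only [HasSum, SummationFilter.unconditional_filter, ← sum_filter] at hfa hfb
  have hlevels (F : Finset ℕ+) (p : A → Prop) [DecidablePred p] :
      Tendsto (fun r => ∑ n ∈ F with p (α n), windowDensity (netLevel k n) r) atTop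
        (𝓝 (∑ n ∈ F with p (α n), ((1 : ℝ) / 2) ^ (n : ℕ))) :=
    tendsto_finsetSum _ fun n _ => tendsto_windowDensity_netLevel k n
  suffices Tendsto (windowDensity {i | x i = a}) atTop (𝓝 S) from
    this.congr fun r => windowDensity_setOf (fun i => x i = a) r
  refine tendsto_of_tendsto_of_tendsto_of_forall_bounds hfa
    (by simpa only [sub_sub_cancel] using hfb.const_sub 1)
    (fun F => ⟨_, hlevels F (· = a), sum_windowDensity_netLevel_le hk hxk F (· = a)⟩)
    (fun F => ⟨_, tendsto_const_nhds.sub (hlevels F (· ≠ a)), fun r => ?_⟩)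
  have hother := sum_windowDensity_netLevel_le hk hxk F (· ≠ a) r
  rw [show {i | x i ≠ a} = {i | x i = a}ᶜ from rfl, windowDensity_compl] at hother
  linarith

/-- In any configuration of `D_α`, each letter `a` has a frequency,
equal to `Σ_{i : α_i = a} 2^{-i}`. -/
theorem frequency_in_Dconf {A : Type*} [Fintype A] [DecidableEq A]
    (α : ℕ+ → A) (x : ℤ → A) (hx : x ∈ Dconf α) (a : A) :
    Filter.Tendsto
      (fun r : ℕ =>
        (((Finset.Icc (-(r : ℤ)) (r : ℤ)).filter fun i => x i = a).card : ℝ) /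
          (2 * (r : ℝ) + 1))
      Filter.atTop
      (nhds (∑' i : ℕ+, if α i = a then ((1 : ℝ) / 2) ^ (i : ℕ) else 0)) :=
  frequency_in_Dconf_general α x hx a
end

section
/- Let α ∈ A^{ℕ₊}, x ∈ D_α, j ∈ ℤ, and let i be an odd positive integer. Then the configuration y defined by y_m = x_{im+j} belongs to D_α. -/
/-! Since `i` is a unit modulo every `2^n`, each level `2^n ℤ + k n` pulls back under
`m ↦ i m + j` to a whole progression `2^n ℤ + c n`. The pulled-back levels are disjoint
because the original ones are, and `x (i m + j) = α n` on them. -/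

theorem IsOneNet.of_mapsTo {f : ℤ → ℤ} {k c : ℕ+ → ℤ} (hk : IsOneNet k)
    (hf : ∀ n, Set.MapsTo f (netLevel c n) (netLevel k n)) : IsOneNet c :=
  fun _ _ hmn => ((hk hmn).preimage f).mono (hf _).subset_preimage (hf _).subset_preimage

theorem comp_mem_Dconf {A : Type*} {α : ℕ+ → A} {x : ℤ → A} (hx : x ∈ Dconf α) {f : ℤ → ℤ}
    (hf : ∀ k, ∃ c : ℕ+ → ℤ, ∀ n, Set.MapsTo f (netLevel c n) (netLevel k n)) :
    x ∘ f ∈ Dconf α := by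
  obtain ⟨k, hnet, hxk⟩ := hx
  obtain ⟨c, hc⟩ := hf k
  exact ⟨c, hnet.of_mapsTo hc, fun n m hm => hxk n (f m) (hc n hm)⟩

theorem exists_affine_mapsTo_netLevel {i : ℤ} (hi : ∀ n : ℕ+, IsCoprime i (2 ^ (n : ℕ)))
    (j : ℤ) (k : ℕ+ → ℤ) :
    ∃ c : ℕ+ → ℤ, ∀ n, Set.MapsTo (fun m => i * m + j) (netLevel c n) (netLevel k n) := by
  choose u v huv using hi
  refine ⟨fun n => u n * (k n - j), fun n m ⟨s, hs⟩ => ⟨i * s - v n * (k n - j), ?_⟩⟩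
  rw [hs]
  linear_combination (k n - j) * huv n

theorem Dconf_odd_subprogression_general {A : Type*} (α : ℕ+ → A) (x : ℤ → A)
    (hx : x ∈ Dconf α) (j i : ℤ) (hodd : Odd i) :
    (fun m : ℤ => x (i * m + j)) ∈ Dconf α :=
  comp_mem_Dconf hx fun k =>
    exists_affine_mapsTo_netLevel (fun _ => (Int.isCoprime_two_right.mpr hodd).pow_right) j k

/-- Reading a configuration of `D_α` along an arithmetic progression `i ℤ + j`
with `i` odd and positive again yields a configuration of `D_α`. -/
theorem Dconf_odd_subprogression {A : Type*} (α : ℕ+ → A) (x : ℤ → A)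
    (hx : x ∈ Dconf α) (j i : ℤ) (hodd : Odd i) (hpos : 0 < i) :
    (fun m : ℤ => x (i * m + j)) ∈ Dconf α :=
  Dconf_odd_subprogression_general α x hx j i hodd
end

section
/- For any nonempty closed set S ⊆ A^{ℕ₊}, the set D_S = ⋃_{α ∈ S} D_α is a nonempty subshift of A^ℤ, i.e., it is nonempty, closed in the product topology, and invariant under the shift. -/
open scoped Fin.IntCast

section

variable {A : Type*}

lemma mem_netLevel_iff {k : ℕ+ → ℤ} {n : ℕ+} {i : ℤ} :
    i ∈ netLevel k n ↔ k n ≡ i [ZMOD 2 ^ (n : ℕ)] := by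
  rw [Int.modEq_iff_dvd, dvd_iff_exists_eq_mul_right]
  exact exists_congr fun t => by constructor <;> intro h <;> linarith

lemma netLevel_congr {k k' : ℕ+ → ℤ} {n : ℕ+} (h : k n ≡ k' n [ZMOD 2 ^ (n : ℕ)]) :
    netLevel k n = netLevel k' n := by
  ext i
  simp only [mem_netLevel_iff]
  exact ⟨h.symm.trans, h.trans⟩

lemma netLevel_sub_const (k : ℕ+ → ℤ) (c : ℤ) (n : ℕ+) :
    netLevel (fun m => k m - c) n = (· + c) ⁻¹' netLevel k n := by
  ext i
  exact exists_congr fun t => by constructor <;> intro h <;> linarith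

lemma IsOneNet.sub_const {k : ℕ+ → ℤ} (hk : IsOneNet k) (c : ℤ) :
    IsOneNet fun m => k m - c := fun m n hmn => by
  simpa only [netLevel_sub_const] using (hk hmn).preimage (· + c)

lemma Dconf_shift {α : ℕ+ → A} {x : ℤ → A} (hx : x ∈ Dconf α) :
    (fun i : ℤ => x (i + 1)) ∈ Dconf α := by
  obtain ⟨k, hk, hval⟩ := hx
  refine ⟨fun m => k m - 1, hk.sub_const 1, fun n i hi => hval n (i + 1) ?_⟩
  rwa [netLevel_sub_const] at hi

/-- Level `n` of this net consists of the integers of 2-adic valuation `n - 1`. -/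
def dyadicNet (n : ℕ+) : ℤ := 2 ^ ((n : ℕ) - 1)

lemma isOneNet_dyadicNet : IsOneNet dyadicNet := by
  suffices h : ∀ m n : ℕ+, m < n → Disjoint (netLevel dyadicNet m) (netLevel dyadicNet n) from
    fun m n hmn => (lt_or_gt_of_ne hmn).elim (h m n) fun hnm => (h n m hnm).symm
  refine fun m n hmn => Set.disjoint_left.mpr fun i him hin => ?_
  rw [mem_netLevel_iff, Int.modEq_iff_dvd] at him hin
  -- `2 ^ m` divides `i - 2 ^ (m - 1)`, `i - 2 ^ (n - 1)` and `2 ^ (n - 1)`, hence `2 ^ (m - 1)`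
  have hmn' : (m : ℕ) ≤ (n : ℕ) - 1 := by have : (m : ℕ) < n := hmn; omega
  have hdvd : (2 : ℤ) ^ (m : ℕ) ∣ 2 ^ ((m : ℕ) - 1) := by
    have hn : (2 : ℤ) ^ (m : ℕ) ∣ 2 ^ ((n : ℕ) - 1) := pow_dvd_pow 2 hmn'
    have hi := dvd_sub (dvd_add ((pow_dvd_pow 2 (hmn'.trans (Nat.sub_le _ 1))).trans hin) hn) him
    rwa [dyadicNet, dyadicNet, sub_add_cancel, sub_sub_cancel] at hi
  have := (pow_dvd_pow_iff two_ne_zero Int.prime_two.not_isUnit).mp hdvd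
  have := m.pos
  omega

lemma IsOneNet.Dconf_nonempty {k : ℕ+ → ℤ} (hk : IsOneNet k) (α : ℕ+ → A) :
    (Dconf α).Nonempty := by
  classical
  refine ⟨fun i => if h : ∃ n, i ∈ netLevel k n then α h.choose else α 1, k, hk,
    fun n i hi => ?_⟩
  have h : ∃ m, i ∈ netLevel k m := ⟨n, hi⟩
  dsimp only
  rw [dif_pos h]
  by_contra hne
  exact Set.disjoint_left.mp (hk fun heq => hne (congrArg α heq)) h.choose_spec hi

abbrev NetOffsets : Type := ∀ n : ℕ+, Fin (2 ^ (n : ℕ))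

def netOfOffsets (κ : NetOffsets) : ℕ+ → ℤ := fun n => (κ n : ℕ)

lemma netLevel_netOfOffsets_intCast (k : ℕ+ → ℤ) :
    netLevel (netOfOffsets fun n => (k n : Fin (2 ^ (n : ℕ)))) = netLevel k := by
  funext n
  refine netLevel_congr ?_
  rw [netOfOffsets, Fin.val_intCast, Int.toNat_of_nonneg (Int.emod_nonneg _ (by positivity))]
  push_cast
  exact Int.mod_modEq _ _

def netCompatible (S : Set (ℕ+ → A)) :
    Set ((NetOffsets × (ℕ+ → A)) × (ℤ → A)) :=
  {q | IsOneNet (netOfOffsets q.1.1) ∧ q.1.2 ∈ S ∧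
    ∀ n : ℕ+, ∀ i ∈ netLevel (netOfOffsets q.1.1) n, q.2 i = q.1.2 n}

lemma biUnion_Dconf_eq_image (S : Set (ℕ+ → A)) :
    ⋃ α ∈ S, Dconf α = Prod.snd '' netCompatible S := by
  ext x
  simp only [Set.mem_iUnion, Set.mem_image, Prod.exists, exists_eq_right]
  constructor
  · rintro ⟨α, hα, k, hk, hx⟩
    refine ⟨fun n => (k n : Fin (2 ^ (n : ℕ))), α, ?_⟩
    simp only [netCompatible, Set.mem_ofPred_eq, IsOneNet, netLevel_netOfOffsets_intCast]
    exact ⟨hk, hα, hx⟩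
  · rintro ⟨κ, α, hκ, hα, hx⟩
    exact ⟨α, hα, netOfOffsets κ, hκ, hx⟩

lemma isClosed_setOf_isOneNet :
    IsClosed {κ : NetOffsets | IsOneNet (netOfOffsets κ)} := by
  simp only [IsOneNet, Pairwise, Set.ofPred_forall]
  refine isClosed_iInter fun m => isClosed_iInter fun n => isClosed_iInter fun _ => ?_
  exact (isClosed_discrete {r : Fin (2 ^ (m : ℕ)) × Fin (2 ^ (n : ℕ)) |
    Disjoint (netLevel (fun _ => (r.1 : ℕ)) m) (netLevel (fun _ => (r.2 : ℕ)) n)}).preimage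
    (f := fun κ : NetOffsets => (κ m, κ n)) (by fun_prop)

lemma isClosed_setOf_constant_on_netLevel [TopologicalSpace A] [DiscreteTopology A] :
    IsClosed {q : (NetOffsets × (ℕ+ → A)) × (ℤ → A) |
      ∀ n : ℕ+, ∀ i ∈ netLevel (netOfOffsets q.1.1) n, q.2 i = q.1.2 n} := by
  simp only [Set.ofPred_forall]
  refine isClosed_iInter fun n => isClosed_iInter fun i => ?_
  exact (isClosed_discrete {r : Fin (2 ^ (n : ℕ)) × A × A |
    i ∈ netLevel (fun _ => (r.1 : ℕ)) n → r.2.2 = r.2.1}).preimage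
    (f := fun q : (NetOffsets × (ℕ+ → A)) × (ℤ → A) =>
      (q.1.1 n, q.1.2 n, q.2 i)) (by fun_prop)

lemma isClosed_netCompatible [TopologicalSpace A] [DiscreteTopology A] {S : Set (ℕ+ → A)}
    (hS : IsClosed S) : IsClosed (netCompatible S) :=
  (isClosed_setOf_isOneNet.preimage (by fun_prop)).inter
    ((hS.preimage (by fun_prop)).inter isClosed_setOf_constant_on_netLevel)

lemma isClosed_biUnion_Dconf [TopologicalSpace A] [DiscreteTopology A] [Finite A]
    {S : Set (ℕ+ → A)} (hS : IsClosed S) : IsClosed (⋃ α ∈ S, Dconf α) := by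
  rw [biUnion_Dconf_eq_image]
  exact isClosedMap_snd_of_compactSpace _ (isClosed_netCompatible hS)

end

/-- For any nonempty closed `S ⊆ A^{ℕ₊}`, the set `D_S = ⋃_{α ∈ S} D_α` is a nonempty
subshift: nonempty, closed in the product topology, and shift-invariant. -/
theorem DS_nonempty_subshift {A : Type*} [Fintype A]
    [TopologicalSpace A] [DiscreteTopology A]
    (S : Set (ℕ+ → A)) (hne : S.Nonempty) (hcl : IsClosed S) :
    (⋃ α ∈ S, Dconf α).Nonempty ∧ IsClosed (⋃ α ∈ S, Dconf α) ∧
      ∀ x ∈ ⋃ α ∈ S, Dconf α, (fun i : ℤ => x (i + 1)) ∈ ⋃ α ∈ S, Dconf α := by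
  obtain ⟨α₀, hα₀⟩ := hne
  refine ⟨?_, isClosed_biUnion_Dconf hcl, ?_⟩
  · obtain ⟨x, hx⟩ := isOneNet_dyadicNet.Dconf_nonempty α₀
    exact ⟨x, Set.mem_biUnion hα₀ hx⟩
  · simp only [Set.mem_iUnion]
    rintro x ⟨α, hα, hx⟩
    exact ⟨α, hα, Dconf_shift hx⟩
end

section
/- If a 2D SFT N letter-factors onto itself after a 2×2 block recoding (i.e., N 0-simulates itself injectively with parameters 2, 2), then the directional entropy of N in the vertical direction is 0. -/
open Filter

/-- The shift by a vector `v ∈ ℤ²` on two-dimensional configurations. -/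
def shift2 {A : Type*} (v : ℤ × ℤ) (x : ℤ × ℤ → A) : ℤ × ℤ → A :=
  fun p => x (p.1 + v.1, p.2 + v.2)

/-- The `B × T` block recoding of a configuration: the macro-cell at position `p`
carries the `B × T` rectangle of `x` based at `(p.1 * B, p.2 * T)`. -/
def block {A : Type*} (B T : ℕ) (x : ℤ × ℤ → A) : ℤ × ℤ → (Fin B × Fin T → A) :=
  fun p q => x (p.1 * (B : ℤ) + (q.1 : ℤ), p.2 * (T : ℤ) + (q.2 : ℤ))

/-- The patterns of `X` on the rectangle `[0,k) × [0,r)`. -/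
def patt {A : Type*} (X : Set (ℤ × ℤ → A)) (k r : ℕ) : Set (Fin k × Fin r → A) :=
  {u | ∃ x ∈ X, ∀ q : Fin k × Fin r, u q = x ((q.1 : ℤ), (q.2 : ℤ))}

/-- `N_{k,r}(X)`: the number of patterns of `X` on the rectangle `[0,k) × [0,r)`. -/
noncomputable def Npat {A : Type*} (X : Set (ℤ × ℤ → A)) (k r : ℕ) : ℕ :=
  (patt X k r).ncard

/-- `X` `l`-simulates `Y` with parameters `B, T`: there are `Z ⊆ X` and a letter
projection `π` such that `X` is the union of the `B × T` translates of `Z`, the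
`B × T` block recoding of `Z` letter-factors onto `Y` via `π`, and the projected
letters of `2l+1` horizontally consecutive rectangles determine the central one. -/
def LSimulates {A C : Type*} (X : Set (ℤ × ℤ → A)) (Y : Set (ℤ × ℤ → C))
    (l B T : ℕ) : Prop :=
  ∃ Z ⊆ X, ∃ π : (Fin B × Fin T → A) → C,
    (X = ⋃ i : Fin B, ⋃ j : Fin T, shift2 ((i : ℤ), (j : ℤ)) '' Z) ∧
    ((fun x : ℤ × ℤ → A => fun p : ℤ × ℤ => π (block B T x p)) '' Z = Y) ∧
    (∀ x ∈ Z, ∀ x' ∈ Z, ∀ p : ℤ × ℤ,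
      (∀ d : ℤ, |d| ≤ (l : ℤ) →
        π (block B T x (p.1 + d, p.2)) = π (block B T x' (p.1 + d, p.2))) →
      block B T x p = block B T x' p)

/-- `h` is the directional entropy of `X` in the vertical direction `e₂`:
`h = lim_{k → ∞} lim_{r → ∞} log N_{k,r}(X) / r`. -/
def HasDirEntV {A : Type*} (X : Set (ℤ × ℤ → A)) (h : ℝ) : Prop :=
  ∃ g : ℕ → ℝ,
    (∀ k : ℕ, Tendsto (fun r : ℕ => Real.log (Npat X k r : ℝ) / (r : ℝ))
      atTop (nhds (g k))) ∧
    Tendsto g atTop (nhds h)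

/-- `h` is the directional entropy of `X` in the horizontal direction `e₁`:
`h = lim_{k → ∞} lim_{r → ∞} log N_{r,k}(X) / r`. -/
def HasDirEntH {A : Type*} (X : Set (ℤ × ℤ → A)) (h : ℝ) : Prop :=
  ∃ g : ℕ → ℝ,
    (∀ k : ℕ, Tendsto (fun r : ℕ => Real.log (Npat X r k : ℝ) / (r : ℝ))
      atTop (nhds (g k))) ∧
    Tendsto g atTop (nhds h)

/-- `X` `l`-simulates `Y` injectively: as `LSimulates`, and moreover the block
recoding map is injective on `Z`. -/
def LSimulatesInj {A C : Type*} (X : Set (ℤ × ℤ → A)) (Y : Set (ℤ × ℤ → C))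
    (l B T : ℕ) : Prop :=
  ∃ Z ⊆ X, ∃ π : (Fin B × Fin T → A) → C,
    (X = ⋃ i : Fin B, ⋃ j : Fin T, shift2 ((i : ℤ), (j : ℤ)) '' Z) ∧
    ((fun x : ℤ × ℤ → A => fun p : ℤ × ℤ => π (block B T x p)) '' Z = Y) ∧
    (∀ x ∈ Z, ∀ x' ∈ Z, ∀ p : ℤ × ℤ,
      (∀ d : ℤ, |d| ≤ (l : ℤ) →
        π (block B T x (p.1 + d, p.2)) = π (block B T x' (p.1 + d, p.2))) →
      block B T x p = block B T x' p) ∧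
    Set.InjOn (fun x : ℤ × ℤ → A => fun p : ℤ × ℤ => π (block B T x p)) Z

/-!
Every pattern of `N` on a `2a × 2b` rectangle is, for one of the four offsets of the cover,
a window of a pattern of `Z` on a `(2a + 2) × (2b + 2)` rectangle. Since `l = 0`, each
`2 × 2` block of a configuration in `Z` is determined by the letter it recodes to, so that
pattern of `Z` is determined by the `(a + 1) × (b + 1)` pattern of `N` it recodes to. Hence
`N_{2a,2b} ≤ 4 N_{a+1,b+1}`, and dividing by `2b` and letting `b → ∞`, then `a → ∞`, gives
`h ≤ h / 2`; as `h ≥ 0`, `h = 0`.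
-/

open Topology

theorem Set.ncard_image_le_ncard_image_of_factorsThrough {α β γ : Type*} {s : Set α}
    {f : α → β} {g : α → γ} (h : ∀ x ∈ s, ∀ y ∈ s, g x = g y → f x = f y)
    (hg : (g '' s).Finite := by toFinite_tac) :
    (f '' s).ncard ≤ (g '' s).ncard := by
  set fg : α → β × γ := fun x => (f x, g x)
  have hinj : (fg '' s).InjOn Prod.snd := by
    rintro _ ⟨x, hx, rfl⟩ _ ⟨y, hy, rfl⟩ hxy
    exact Prod.ext (h x hx y hy hxy) hxy
  have hfin : (fg '' s).Finite := Set.Finite.of_finite_image (by rwa [Set.image_image]) hinj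
  calc (f '' s).ncard = (Prod.fst '' (fg '' s)).ncard := by rw [Set.image_image]
    _ ≤ (fg '' s).ncard := Set.ncard_image_le hfin
    _ = (Prod.snd '' (fg '' s)).ncard := hinj.ncard_image.symm
    _ = (g '' s).ncard := by rw [Set.image_image]

section Patterns

variable {A : Type*}

def restrictRect (k r : ℕ) (x : ℤ × ℤ → A) : Fin k × Fin r → A :=
  fun q => x ((q.1 : ℤ), (q.2 : ℤ))

theorem patt_eq_image (X : Set (ℤ × ℤ → A)) (k r : ℕ) : patt X k r = restrictRect k r '' X := by
  ext u
  simp only [patt, Set.mem_ofPred_eq, Set.mem_image, funext_iff, restrictRect, eq_comm]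

theorem ncard_patt_shift_image_le [Finite A] (Z : Set (ℤ × ℤ → A)) {k r k' r' i j : ℕ}
    (hk : k + i ≤ k') (hr : r + j ≤ r') :
    (patt (shift2 ((i : ℤ), (j : ℤ)) '' Z) k r).ncard ≤ (patt Z k' r').ncard := by
  rw [patt_eq_image, patt_eq_image, Set.image_image]
  refine Set.ncard_image_le_ncard_image_of_factorsThrough fun x _ y _ hxy => funext fun q => ?_
  simpa [restrictRect, shift2] using congrFun hxy (⟨q.1 + i, by omega⟩, ⟨q.2 + j, by omega⟩)

theorem npat_iUnion_shift_image_le [Finite A] (Z : Set (ℤ × ℤ → A)) (B T k r : ℕ) :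
    Npat (⋃ i : Fin B, ⋃ j : Fin T, shift2 ((i : ℤ), (j : ℤ)) '' Z) k r ≤
      B * T * (patt Z (k + B) (r + T)).ncard := by
  rw [Npat, patt_eq_image, Set.image_iUnion₂]
  calc _ ≤ ∑ i : Fin B, (⋃ j : Fin T, restrictRect k r '' (shift2 ((i : ℤ), (j : ℤ)) '' Z)).ncard :=
        Set.ncard_iUnion_le_of_fintype _
    _ ≤ ∑ _i : Fin B, ∑ _j : Fin T, (patt Z (k + B) (r + T)).ncard := by
        refine Finset.sum_le_sum fun i _ => (Set.ncard_iUnion_le_of_fintype _).trans <|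
          Finset.sum_le_sum fun j _ => ?_
        rw [← patt_eq_image]
        exact ncard_patt_shift_image_le Z (by omega) (by omega)
    _ = B * T * (patt Z (k + B) (r + T)).ncard := by simp [mul_assoc]

theorem ncard_patt_mul_le_npat_image {C : Type*} [Finite C] {Z : Set (ℤ × ℤ → A)} {B T : ℕ}
    {π : (Fin B × Fin T → A) → C}
    (hdet : ∀ x ∈ Z, ∀ x' ∈ Z, ∀ p : ℤ × ℤ,
      π (block B T x p) = π (block B T x' p) → block B T x p = block B T x' p)
    (a b : ℕ) :
    (patt Z (B * a) (T * b)).ncard ≤ Npat ((fun x p => π (block B T x p)) '' Z) a b := by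
  rw [Npat, patt_eq_image, patt_eq_image, Set.image_image]
  refine Set.ncard_image_le_ncard_image_of_factorsThrough fun x hx x' hx' hxx' => ?_
  funext ⟨⟨m, hm⟩, ⟨n, hn⟩⟩
  have hB : 0 < B := Nat.pos_of_mul_pos_right (Nat.zero_lt_of_lt hm)
  have hT : 0 < T := Nat.pos_of_mul_pos_right (Nat.zero_lt_of_lt hn)
  have hblock := hdet x hx x' hx' (((m / B : ℕ) : ℤ), ((n / T : ℕ) : ℤ))
    (congrFun hxx' (⟨m / B, Nat.div_lt_of_lt_mul hm⟩, ⟨n / T, Nat.div_lt_of_lt_mul hn⟩))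
  have hcell := congrFun hblock (⟨m % B, Nat.mod_lt _ hB⟩, ⟨n % T, Nat.mod_lt _ hT⟩)
  have hm' : ((m / B : ℕ) : ℤ) * B + ((m % B : ℕ) : ℤ) = m := by exact_mod_cast Nat.div_add_mod' m B
  have hn' : ((n / T : ℕ) : ℤ) * T + ((n % T : ℕ) : ℤ) = n := by exact_mod_cast Nat.div_add_mod' n T
  simpa only [restrictRect, block, hm', hn'] using hcell

end Patterns

theorem LSimulatesInj.lSimulates {A C : Type*} {X : Set (ℤ × ℤ → A)} {Y : Set (ℤ × ℤ → C)}
    {l B T : ℕ} (h : LSimulatesInj X Y l B T) : LSimulates X Y l B T :=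
  let ⟨Z, hZ, π, hcover, himg, hdet, _⟩ := h
  ⟨Z, hZ, π, hcover, himg, hdet⟩

theorem LSimulates.npat_mul_le {A C : Type*} [Finite A] [Finite C] {X : Set (ℤ × ℤ → A)}
    {Y : Set (ℤ × ℤ → C)} {B T : ℕ} (h : LSimulates X Y 0 B T) (a b : ℕ) :
    Npat X (B * a) (T * b) ≤ B * T * Npat Y (a + 1) (b + 1) := by
  obtain ⟨Z, -, π, rfl, rfl, hdet⟩ := h
  have hdet₀ : ∀ x ∈ Z, ∀ x' ∈ Z, ∀ p : ℤ × ℤ,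
      π (block B T x p) = π (block B T x' p) → block B T x p = block B T x' p :=
    fun x hx x' hx' p hp => hdet x hx x' hx' p fun d hd => by
      simpa [abs_nonpos_iff.mp hd] using hp
  calc Npat _ (B * a) (T * b) ≤ B * T * (patt Z (B * a + B) (T * b + T)).ncard :=
        npat_iUnion_shift_image_le Z B T _ _
    _ ≤ B * T * Npat _ (a + 1) (b + 1) :=
        Nat.mul_le_mul_left _ (ncard_patt_mul_le_npat_image hdet₀ (a + 1) (b + 1))

theorem Real.log_natCast_le_add_of_le_mul {x c y : ℕ} (h : x ≤ c * y) :
    Real.log x ≤ Real.log c + Real.log y := by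
  rcases Nat.eq_zero_or_pos x with rfl | hx
  · simpa using add_nonneg (Real.log_natCast_nonneg c) (Real.log_natCast_nonneg y)
  have hcy : 0 < c * y := hx.trans_le h
  rw [← Real.log_mul (by exact_mod_cast (Nat.pos_of_mul_pos_right hcy).ne')
    (by exact_mod_cast (Nat.pos_of_mul_pos_left hcy).ne')]
  exact Real.log_le_log (by exact_mod_cast hx) (by exact_mod_cast h)

theorem tendsto_comp_add_one_div_of_tendsto_div {u : ℕ → ℝ} {L : ℝ}
    (hu : Tendsto (fun n : ℕ => u n / n) atTop (𝓝 L)) :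
    Tendsto (fun n : ℕ => u (n + 1) / n) atTop (𝓝 L) := by
  have hratio : Tendsto (fun n : ℕ => ((n : ℝ) + 1) / n) atTop (𝓝 1) := by
    simpa using (tendsto_natCast_div_add_atTop (1 : ℝ)).inv₀ one_ne_zero
  have hlim := (hu.comp (tendsto_add_atTop_nat 1)).mul hratio
  rw [mul_one] at hlim
  refine hlim.congr' (eventually_atTop.mpr ⟨1, fun n hn => ?_⟩)
  have hn0 : (n : ℝ) ≠ 0 := by positivity
  simp only [Function.comp_apply, Nat.cast_add, Nat.cast_one]
  field_simp

theorem HasDirEntV.nonneg {A : Type*} {X : Set (ℤ × ℤ → A)} {h : ℝ} (hX : HasDirEntV X h) :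
    0 ≤ h := by
  obtain ⟨g, hg, hgh⟩ := hX
  exact ge_of_tendsto' hgh fun k => ge_of_tendsto' (hg k) fun r =>
    div_nonneg (Real.log_natCast_nonneg _) r.cast_nonneg

theorem HasDirEntV.le_div_of_npat_le {A C : Type*} {X : Set (ℤ × ℤ → A)} {Y : Set (ℤ × ℤ → C)}
    {hX hY : ℝ} {B T c : ℕ} (hB : 0 < B) (hT : 0 < T) (hXent : HasDirEntV X hX)
    (hYent : HasDirEntV Y hY) (hle : ∀ a b, Npat X (B * a) (T * b) ≤ c * Npat Y (a + 1) (b + 1)) :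
    hX ≤ hY / T := by
  obtain ⟨g, hg, hgX⟩ := hXent
  obtain ⟨g', hg', hgY⟩ := hYent
  have hstep : ∀ a, g (B * a) ≤ g' (a + 1) / T := by
    intro a
    have hTb : Tendsto (fun b : ℕ => T * b) atTop atTop :=
      tendsto_atTop_mono (fun b => Nat.le_mul_of_pos_left b hT) tendsto_id
    have hbound : Tendsto (fun b : ℕ => (Real.log c + Real.log (Npat Y (a + 1) (b + 1))) /
        ((T * b : ℕ) : ℝ)) atTop (𝓝 (g' (a + 1) / T)) := by
      have := ((tendsto_const_div_atTop_nhds_zero_nat (Real.log c)).add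
        (tendsto_comp_add_one_div_of_tendsto_div (hg' (a + 1)))).div_const (T : ℝ)
      rw [zero_add] at this
      refine this.congr fun b => ?_
      push_cast
      ring
    exact le_of_tendsto_of_tendsto ((hg (B * a)).comp hTb) hbound <| Eventually.of_forall
      fun b => div_le_div_of_nonneg_right (Real.log_natCast_le_add_of_le_mul (hle a b))
        (Nat.cast_nonneg _)
  have hBa : Tendsto (fun a : ℕ => B * a) atTop atTop :=
    tendsto_atTop_mono (fun a => Nat.le_mul_of_pos_left a hB) tendsto_id
  exact le_of_tendsto_of_tendsto' (hgX.comp hBa)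
    ((hgY.comp (tendsto_add_atTop_nat 1)).div_const _) hstep

theorem dirEntV_zero_of_self_simulation_general {A : Type*} [Fintype A]
    (N : Set (ℤ × ℤ → A))
    (hsim : LSimulatesInj N N 0 2 2)
    (h : ℝ) (hent : HasDirEntV N h) :
    h = 0 := by
  have hhalf : h ≤ h / 2 := by
    simpa using hent.le_div_of_npat_le two_pos two_pos hent hsim.lSimulates.npat_mul_le
  linarith [hent.nonneg]

/-- If a 2D subshift of finite type `N` `0`-simulates itself injectively with
parameters `2, 2`, then its vertical directional entropy is `0`. -/
theorem dirEntV_zero_of_self_simulation {A : Type*} [Fintype A]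
    [TopologicalSpace A] [DiscreteTopology A]
    (N : Set (ℤ × ℤ → A)) (hcl : IsClosed N)
    (hsh : ∀ v : ℤ × ℤ, ∀ x ∈ N, shift2 v x ∈ N)
    (hsim : LSimulatesInj N N 0 2 2)
    (h : ℝ) (hent : HasDirEntV N h) :
    h = 0 :=
  dirEntV_zero_of_self_simulation_general N hsim h hent
end
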